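/- arXiv:1310.3210 — 7 statements merged into one kernel-verified Lean document; each statement's English description precedes it below -/
import Mathlib

section
/- Let V be the inverse limit of an inverse sequence of finite-dimensional vector spaces V_i over a topological field K, with quotient maps Q_i : V → V_i. A vector subspace W ≤ V is closed in the inverse-limit topology if and only if W equals the intersection over all i of the preimages Q_i⁻¹(Q_i(W)). -/
/-- The inverse limit of an inverse sequence of `K`-modules along the connecting
maps `q i : V (i+1) → V i`, realized as the submodule of consistent sequences in
the product `∀ i, V i`. -/
def invLim (K : Type) [Field K] (V : ℕ → Type) [∀ i, AddCommGroup (V i)]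
    [∀ i, Module K (V i)] (q : ∀ i, V (i + 1) →ₗ[K] V i) : Submodule K (∀ i, V i) where
  carrier := {v | ∀ i, q i (v (i + 1)) = v i}
  add_mem' := by intro a b ha hb i; simp [ha i, hb i]
  zero_mem' := by intro i; simp
  smul_mem' := by intro c a ha i; simp [ha i]

/-- The canonical projection `Q i` from the inverse limit to the `i`-th stage. -/
def invLimProj (K : Type) [Field K] (V : ℕ → Type) [∀ i, AddCommGroup (V i)]
    [∀ i, Module K (V i)] (q : ∀ i, V (i + 1) →ₗ[K] V i) (i : ℕ) :
    ↥(invLim K V q) →ₗ[K] V i :=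
  (LinearMap.proj i).comp (invLim K V q).subtype

/-- The composite connecting map `q^j_i : V j → V i` for `i ≤ j`. -/
def qIter (K : Type) [Field K] (V : ℕ → Type) [∀ i, AddCommGroup (V i)]
    [∀ i, Module K (V i)] (q : ∀ i, V (i + 1) →ₗ[K] V i) (i : ℕ) :
    ∀ j, i ≤ j → (V j →ₗ[K] V i)
  | 0, h => by
    have hi : i = 0 := Nat.le_zero.mp h
    subst hi; exact LinearMap.id
  | j + 1, h =>
    if heq : i = j + 1 then by subst heq; exact LinearMap.id
    else (qIter K V q i j (by omega)).comp (q j)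

/-!
If `v` lies in every `Q i ⁻¹' (Q i '' W)`, pick `w N ∈ W` with `Q N (w N) = Q N v`; by
compatibility `w N` agrees with `v` at every stage `i ≤ N`, so `w N → v` and `v ∈ closure W`.
Conversely each `Q i '' W` is a subspace of `K^(n i)`, hence closed, so the intersection is closed.
-/

-- `S` is the zero set of the projection onto a complement, and linear maps on `ι → K` are continuous.
theorem Submodule.isClosed_of_finite_pi {K ι : Type*} [DivisionRing K] [TopologicalSpace K]
    [IsTopologicalRing K] [T1Space K] [Finite ι] (S : Submodule K (ι → K)) :
    IsClosed (S : Set (ι → K)) := by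
  obtain ⟨T, hST⟩ := S.exists_isCompl
  let f := T.subtype.comp (Submodule.projectionOnto T S hST.symm)
  have hS : (S : Set (ι → K)) = f ⁻¹' {0} := by
    ext x
    simp [f]
  rw [hS]
  exact isClosed_singleton.preimage f.continuous_on_pi

section InverseLimit

variable {K : Type} [Field K] {V : ℕ → Type} [∀ i, AddCommGroup (V i)] [∀ i, Module K (V i)]
  {q : ∀ i, V (i + 1) →ₗ[K] V i}

theorem invLimProj_apply (x : invLim K V q) (i : ℕ) : invLimProj K V q i x = (x : ∀ j, V j) i :=
  rfl

theorem invLimProj_eq_of_le {x y : invLim K V q} {i N : ℕ} (hiN : i ≤ N)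
    (hxy : invLimProj K V q N x = invLimProj K V q N y) :
    invLimProj K V q i x = invLimProj K V q i y := by
  induction N, hiN using Nat.le_induction with
  | base => exact hxy
  | succ N _ ih =>
    apply ih
    simp only [invLimProj_apply] at hxy ⊢
    rw [← x.2 N, ← y.2 N, hxy]

variable [∀ i, TopologicalSpace (V i)]

theorem continuous_invLimProj (i : ℕ) : Continuous (invLimProj K V q i) :=
  (continuous_apply i).comp continuous_subtype_val

theorem tendsto_of_invLimProj_eq {w : ℕ → invLim K V q} {v : invLim K V q}
    (hw : ∀ N, invLimProj K V q N (w N) = invLimProj K V q N v) :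
    Filter.Tendsto w Filter.atTop (nhds v) := by
  rw [tendsto_subtype_rng, tendsto_pi_nhds]
  intro i
  refine tendsto_const_nhds.congr' ?_
  filter_upwards [Filter.eventually_ge_atTop i] with N hiN
  exact (invLimProj_eq_of_le hiN (hw N)).symm

theorem iInter_preimage_image_invLimProj_subset_closure (S : Set (invLim K V q)) :
    ⋂ i, invLimProj K V q i ⁻¹' (invLimProj K V q i '' S) ⊆ closure S := by
  intro v hv
  simp only [Set.mem_iInter, Set.mem_preimage, Set.mem_image] at hv
  choose w hwS hw using hv
  exact mem_closure_of_tendsto (tendsto_of_invLimProj_eq hw) (Filter.Eventually.of_forall hwS)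

end InverseLimit

theorem closure_eq_iInter_preimage_image_invLimProj {K : Type} [Field K] [TopologicalSpace K]
    [IsTopologicalRing K] [T1Space K] {ι : ℕ → Type} [∀ i, Finite (ι i)]
    {q : ∀ i, (ι (i + 1) → K) →ₗ[K] (ι i → K)} (W : Submodule K (invLim K (fun i => ι i → K) q)) :
    closure (W : Set (invLim K (fun i => ι i → K) q)) =
      ⋂ i, invLimProj K (fun i => ι i → K) q i ⁻¹'
        (invLimProj K (fun i => ι i → K) q i '' W) := by
  refine (closure_minimal ?_ ?_).antisymm (iInter_preimage_image_invLimProj_subset_closure _)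
  · exact Set.subset_iInter fun i => Set.subset_preimage_image _ _
  · refine isClosed_iInter fun i => ?_
    rw [← Submodule.map_coe]
    exact (Submodule.isClosed_of_finite_pi _).preimage (continuous_invLimProj i)

theorem stmt0_general (K : Type) [Field K] [TopologicalSpace K] [IsTopologicalDivisionRing K] [T2Space K]
    (n : ℕ → ℕ) (q : ∀ i, (Fin (n (i + 1)) → K) →ₗ[K] (Fin (n i) → K))
    (W : Submodule K ↥(invLim K (fun i => Fin (n i) → K) q)) :
    IsClosed (W : Set ↥(invLim K (fun i => Fin (n i) → K) q)) ↔
      (W : Set ↥(invLim K (fun i => Fin (n i) → K) q)) =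
        ⋂ i, (invLimProj K (fun i => Fin (n i) → K) q i) ⁻¹'
          ((invLimProj K (fun i => Fin (n i) → K) q i) ''
            (W : Set ↥(invLim K (fun i => Fin (n i) → K) q))) := by
  rw [← closure_eq_iff_isClosed, closure_eq_iInter_preimage_image_invLimProj, eq_comm]

/-- For a pro-finite-dimensional space `V = lim V_i` over a (Hausdorff)
topological field `K`, with quotient maps `Q i`, a vector subspace `W ≤ V` is closed
in the inverse-limit topology iff `W = ⋂ i, Q i ⁻¹ (Q i '' W)`. -/
theorem stmt0 (K : Type) [Field K] [TopologicalSpace K] [IsTopologicalDivisionRing K] [T2Space K]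
    (n : ℕ → ℕ) (q : ∀ i, (Fin (n (i + 1)) → K) →ₗ[K] (Fin (n i) → K))
    (hq : ∀ i, Continuous (q i))
    (W : Submodule K ↥(invLim K (fun i => Fin (n i) → K) q)) :
    IsClosed (W : Set ↥(invLim K (fun i => Fin (n i) → K) q)) ↔
      (W : Set ↥(invLim K (fun i => Fin (n i) → K) q)) =
        ⋂ i, (invLimProj K (fun i => Fin (n i) → K) q i) ⁻¹'
          ((invLimProj K (fun i => Fin (n i) → K) q i) ''
            (W : Set ↥(invLim K (fun i => Fin (n i) → K) q))) :=
  stmt0_general K n q W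
end

section
/- Let V be the inverse limit of finite-dimensional K-vector spaces V_i with projections Q_i : V → V_i, and let T : V → W be a continuous K-linear map into a finite-dimensional K-vector space W. Then there exists an index i such that ker Q_i ⊆ ker T, and hence T factors through Q_i as T = T_i ∘ Q_i for some K-linear map T_i : V_i → W. -/
open Filter Topology LinearMap

theorem LinearMap.exists_eq_comp_of_ker_le {K V V' W : Type*} [DivisionRing K]
    [AddCommGroup V] [AddCommGroup V'] [AddCommGroup W] [Module K V] [Module K V'] [Module K W]
    {f : V →ₗ[K] W} {g : V →ₗ[K] V'} (h : ker g ≤ ker f) : ∃ f' : V' →ₗ[K] W, f = f' ∘ₗ g := by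
  obtain ⟨f', hf'⟩ := exists_extend ((ker g).liftQ f h ∘ₗ g.quotKerEquivRange.symm.toLinearMap)
  refine ⟨f', LinearMap.ext fun v => ?_⟩
  have hv := LinearMap.congr_fun hf' ⟨g v, mem_range_self g v⟩
  simp only [coe_comp, Function.comp_apply, Submodule.subtype_apply, LinearEquiv.coe_coe,
    quotKerEquivRange_symm_apply_image, Submodule.mkQ_apply, Submodule.liftQ_apply] at hv
  exact hv.symm

theorem Submodule.eq_bot_of_coe_subset_pi_compl_one {K ι : Type*} [DivisionRing K]
    {P : Submodule K (ι → K)} (hP : (P : Set (ι → K)) ⊆ Set.univ.pi fun _ => {1}ᶜ) : P = ⊥ := by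
  refine eq_bot_iff.2 fun x hx => ?_
  by_contra hne
  obtain ⟨j, hj⟩ := Function.ne_iff.1 hne
  exact hP (P.smul_mem (x j)⁻¹ hx) j trivial (by simp [inv_mul_cancel₀ hj])

theorem pi_compl_one_mem_nhds_zero {K ι : Type*} [Zero K] [One K] [NeZero (1 : K)]
    [TopologicalSpace K] [T1Space K] [Finite ι] :
    (Set.univ.pi fun _ : ι => ({1}ᶜ : Set K)) ∈ 𝓝 0 :=
  set_pi_mem_nhds Set.finite_univ fun _ _ => compl_singleton_mem_nhds zero_ne_one

theorem exists_forall_le_eq_subset_of_mem_nhds {ι : Type*} [Preorder ι] [IsDirectedOrder ι]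
    [Nonempty ι] {X : ι → Type*} [∀ i, TopologicalSpace (X i)] {x : ∀ i, X i}
    {O : Set (∀ i, X i)} (hO : O ∈ 𝓝 x) : ∃ i, {y | ∀ k ≤ i, y k = x k} ⊆ O := by
  rw [nhds_pi, Filter.mem_pi] at hO
  obtain ⟨I, hI, t, ht, hsub⟩ := hO
  obtain ⟨i, hi⟩ := hI.bddAbove
  exact ⟨i, fun y hy => hsub fun k hk => hy k (hi hk) ▸ mem_of_mem_nhds (ht k)⟩

section InverseLimit

variable {K : Type} [Field K] {V : ℕ → Type} [∀ i, AddCommGroup (V i)] [∀ i, Module K (V i)]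
  {q : ∀ i, V (i + 1) →ₗ[K] V i}

theorem ker_invLimProj_antitone : Antitone fun i => ker (invLimProj K V q i) :=
  antitone_nat_of_succ_le fun i v hv => by
    have hv : v.1 (i + 1) = 0 := hv
    change v.1 i = 0
    rw [← v.2 i, hv, map_zero]

theorem exists_ker_invLimProj_subset_of_mem_nhds [∀ i, TopologicalSpace (V i)]
    {U : Set (invLim K V q)} (hU : U ∈ 𝓝 0) :
    ∃ i, (ker (invLimProj K V q i) : Set (invLim K V q)) ⊆ U := by
  obtain ⟨O, hO, hOU⟩ := (mem_nhds_induced Subtype.val 0 U).1 hU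
  obtain ⟨i, hi⟩ := exists_forall_le_eq_subset_of_mem_nhds hO
  exact ⟨i, fun v hv => hOU (hi fun k hk => ker_invLimProj_antitone hk hv)⟩

end InverseLimit

theorem stmt2_general (K : Type) [Field K] [TopologicalSpace K]
    [T2Space K]
    (n : ℕ → ℕ) (q : ∀ i, (Fin (n (i + 1)) → K) →ₗ[K] (Fin (n i) → K))
    (m : ℕ) (T : ↥(invLim K (fun i => Fin (n i) → K) q) →ₗ[K] (Fin m → K))
    (hT : Continuous T) :
    ∃ i, LinearMap.ker (invLimProj K (fun i => Fin (n i) → K) q i) ≤ LinearMap.ker T ∧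
      ∃ Ti : (Fin (n i) → K) →ₗ[K] (Fin m → K),
        T = Ti.comp (invLimProj K (fun i => Fin (n i) → K) q i) := by
  have hpre : T ⁻¹' Set.univ.pi (fun _ => {1}ᶜ) ∈ 𝓝 0 :=
    hT.continuousAt.preimage_mem_nhds (by rw [map_zero]; exact pi_compl_one_mem_nhds_zero)
  obtain ⟨i, hi⟩ := exists_ker_invLimProj_subset_of_mem_nhds hpre
  have hker : ker (invLimProj K (fun i => Fin (n i) → K) q i) ≤ ker T := by
    refine le_ker_iff_map.2 (Submodule.eq_bot_of_coe_subset_pi_compl_one ?_)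
    rintro _ ⟨v, hv, rfl⟩
    exact hi hv
  exact ⟨i, hker, exists_eq_comp_of_ker_le hker⟩

/-- If `V = lim V_i` is a pro-finite-dimensional space over a topological
field `K` with projections `Q i`, and `T : V → W` is a continuous linear map into a
finite-dimensional `K`-vector space `W = K^m`, then some `i` satisfies
`ker (Q i) ⊆ ker T`, and `T` factors as `T = T_i ∘ Q i` for a linear `T_i : V_i → W`. -/
theorem stmt2 (K : Type) [Field K] [TopologicalSpace K] [IsTopologicalDivisionRing K]
    [T2Space K]
    (n : ℕ → ℕ) (q : ∀ i, (Fin (n (i + 1)) → K) →ₗ[K] (Fin (n i) → K))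
    (hq : ∀ i, Continuous (q i))
    (m : ℕ) (T : ↥(invLim K (fun i => Fin (n i) → K) q) →ₗ[K] (Fin m → K))
    (hT : Continuous T) :
    ∃ i, LinearMap.ker (invLimProj K (fun i => Fin (n i) → K) q i) ≤ LinearMap.ker T ∧
      ∃ Ti : (Fin (n i) → K) →ₗ[K] (Fin m → K),
        T = Ti.comp (invLimProj K (fun i => Fin (n i) → K) q i) :=
  stmt2_general K n q m T hT
end

section
/- Let T : V → W be a continuous K-linear map of pro-finite-dimensional spaces presented by compatible finite-level maps T_i : V_i → W_i, and let ℓ(i) ≥ i be chosen so that q^j_i(ker T_j) = q^{ℓ(i)}_i(ker T_{ℓ(i)}) for all j ≥ ℓ(i). Then the projection of the kernel satisfies Q_i(ker T) = q^{ℓ(i)}_i(ker T_{ℓ(i)}) for every i: every element of the stabilized image of kernels at level i lifts to an element of ker T in the inverse limit. -/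
/-!
The stable images `S j = q^{ℓ(j)}_j (ker T_{ℓ(j)})` satisfy `q_j (S (j+1)) = S j`: both sides
are images of `ker T_N` for `N = max (ℓ j) (ℓ (j+1))`. So the connecting maps restrict to
surjections between the `S j` (a Mittag-Leffler system), and any `x ∈ S i` extends, by choosing
preimages level after level, to a thread `v` with `v j ∈ S j ⊆ ker T_j` for all `j`, i.e. to an
element of `ker T`. The reverse inclusion is immediate from `Q_j ∘ T = T_j ∘ Q_j`.
-/

section InverseSystem

variable {K : Type} [Field K] {V : ℕ → Type} [∀ i, AddCommGroup (V i)] [∀ i, Module K (V i)]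
  {q : ∀ i, V (i + 1) →ₗ[K] V i}

theorem qIter_self_apply (i : ℕ) (h : i ≤ i) (y : V i) : qIter K V q i i h y = y := by
  cases i <;> simp [qIter]

theorem qIter_succ_apply {i j : ℕ} (h : i ≤ j) (h' : i ≤ j + 1) (y : V (j + 1)) :
    qIter K V q i (j + 1) h' y = qIter K V q i j h (q j y) := by
  rw [qIter, dif_neg (by omega)]
  rfl

theorem qIter_qIter_apply {i j : ℕ} (hij : i ≤ j) :
    ∀ (k : ℕ) (hjk : j ≤ k) (y : V k),
      qIter K V q i j hij (qIter K V q j k hjk y) = qIter K V q i k (hij.trans hjk) y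
  | 0, hjk, y => by
    obtain rfl : j = 0 := Nat.le_zero.mp hjk
    rw [qIter_self_apply]
  | k + 1, hjk, y => by
    rcases eq_or_lt_of_le hjk with rfl | hjk
    · rw [qIter_self_apply]
    · rw [qIter_succ_apply (Nat.lt_succ_iff.mp hjk), qIter_succ_apply (hij.trans
        (Nat.lt_succ_iff.mp hjk)), qIter_qIter_apply hij k]

theorem qIter_comp_qIter {i j k : ℕ} (hij : i ≤ j) (hjk : j ≤ k) :
    (qIter K V q i j hij).comp (qIter K V q j k hjk) = qIter K V q i k (hij.trans hjk) :=
  LinearMap.ext (qIter_qIter_apply hij k hjk)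

theorem qIter_succ_self (j : ℕ) (h : j ≤ j + 1) : qIter K V q j (j + 1) h = q j :=
  LinearMap.ext fun y => by rw [qIter_succ_apply le_rfl, qIter_self_apply]

theorem apply_qIter_succ {j k : ℕ} (h : j + 1 ≤ k) (y : V k) :
    q j (qIter K V q (j + 1) k h y) = qIter K V q j k (by omega) y := by
  rw [← qIter_qIter_apply (Nat.le_succ j) k h, qIter_succ_self]

theorem qIter_apply_of_mem_invLim {v : ∀ i, V i} (hv : v ∈ invLim K V q) {i j : ℕ}
    (h : i ≤ j) : qIter K V q i j h (v j) = v i := by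
  induction j with
  | zero =>
    obtain rfl : i = 0 := Nat.le_zero.mp h
    rw [qIter_self_apply]
  | succ j ih =>
    rcases eq_or_lt_of_le h with rfl | h
    · rw [qIter_self_apply]
    · rw [qIter_succ_apply (Nat.lt_succ_iff.mp h), hv j, ih]

theorem mapsTo_qIter {S : ∀ j, Set (V j)} (hmaps : ∀ j, Set.MapsTo (q j) (S (j + 1)) (S j))
    {j : ℕ} : ∀ (k : ℕ) (h : j ≤ k), Set.MapsTo (qIter K V q j k h) (S k) (S j)
  | 0, h => by
    obtain rfl : j = 0 := Nat.le_zero.mp h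
    intro y hy
    rwa [qIter_self_apply]
  | k + 1, h => by
    rcases eq_or_lt_of_le h with rfl | h
    · intro y hy
      rwa [qIter_self_apply]
    · intro y hy
      rw [qIter_succ_apply (Nat.lt_succ_iff.mp h)]
      exact mapsTo_qIter hmaps k _ (hmaps k hy)

variable (q) in
/-- Off `q k '' S (k + 1)` the value of `invFunOn` is junk; `liftSeq_mem` shows it is never
needed when `x ∈ S i`. -/
noncomputable def liftSeq (S : ∀ j, Set (V j)) (i : ℕ) (x : V i) : ∀ k, V k
  | 0 => qIter K V q 0 i (Nat.zero_le i) x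
  | k + 1 =>
    if h : k + 1 ≤ i then qIter K V q (k + 1) i h x
    else Function.invFunOn (q k) (S (k + 1)) (liftSeq S i x k)

theorem liftSeq_of_le (S : ∀ j, Set (V j)) {i : ℕ} (x : V i) :
    ∀ (k : ℕ) (h : k ≤ i), liftSeq q S i x k = qIter K V q k i h x
  | 0, _ => rfl
  | k + 1, h => by rw [liftSeq, dif_pos h]

section Surjective

variable {S : ∀ j, Set (V j)} (hmaps : ∀ j, Set.MapsTo (q j) (S (j + 1)) (S j))
  (hsurj : ∀ j, Set.SurjOn (q j) (S (j + 1)) (S j))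
include hmaps hsurj

theorem liftSeq_mem {i : ℕ} {x : V i} (hx : x ∈ S i) (k : ℕ) : liftSeq q S i x k ∈ S k := by
  induction k with
  | zero =>
    rw [liftSeq_of_le S x 0 (Nat.zero_le i)]
    exact mapsTo_qIter hmaps i _ hx
  | succ k ih =>
    by_cases hk : k + 1 ≤ i
    · rw [liftSeq_of_le S x _ hk]
      exact mapsTo_qIter hmaps i hk hx
    · rw [liftSeq, dif_neg hk]
      exact Function.invFunOn_mem (hsurj k ih)

theorem liftSeq_mem_invLim {i : ℕ} {x : V i} (hx : x ∈ S i) :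
    liftSeq q S i x ∈ invLim K V q := by
  intro k
  by_cases hk : k + 1 ≤ i
  · rw [liftSeq_of_le S x (k + 1) hk, liftSeq_of_le S x k (by omega), apply_qIter_succ]
  · rw [liftSeq, dif_neg hk]
    exact Function.invFunOn_eq (hsurj k (liftSeq_mem hmaps hsurj hx k))

theorem exists_mem_invLim_forall_mem {i : ℕ} {x : V i} (hx : x ∈ S i) :
    ∃ v ∈ invLim K V q, v i = x ∧ ∀ j, v j ∈ S j :=
  ⟨liftSeq q S i x, liftSeq_mem_invLim hmaps hsurj hx,
    by rw [liftSeq_of_le S x i le_rfl, qIter_self_apply], liftSeq_mem hmaps hsurj hx⟩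

end Surjective

variable (q) in
def stableImage (N : ∀ j, Submodule K (V j)) (ℓ : ℕ → ℕ) (hℓ : ∀ i, i ≤ ℓ i) (i : ℕ) :
    Submodule K (V i) :=
  (N (ℓ i)).map (qIter K V q i (ℓ i) (hℓ i))

theorem map_qIter_stableImage {N : ∀ j, Submodule K (V j)} {ℓ : ℕ → ℕ} {hℓ : ∀ i, i ≤ ℓ i}
    (hstab : ∀ i j (h : ℓ i ≤ j),
      (N j).map (qIter K V q i j ((hℓ i).trans h)) = stableImage q N ℓ hℓ i)
    {j k : ℕ} (hjk : j ≤ k) :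
    (stableImage q N ℓ hℓ k).map (qIter K V q j k hjk) = stableImage q N ℓ hℓ j := by
  have hj : ℓ j ≤ max (ℓ j) (ℓ k) := le_max_left _ _
  have hk : ℓ k ≤ max (ℓ j) (ℓ k) := le_max_right _ _
  rw [← hstab k _ hk, ← Submodule.map_comp, qIter_comp_qIter, hstab j _ hj]

end InverseSystem

theorem map_qIter_ker_le_ker {K : Type} [Field K] {V W : ℕ → Type}
    [∀ i, AddCommGroup (V i)] [∀ i, Module K (V i)] [∀ i, AddCommGroup (W i)]
    [∀ i, Module K (W i)] {q : ∀ i, V (i + 1) →ₗ[K] V i} {r : ∀ i, W (i + 1) →ₗ[K] W i}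
    {Ti : ∀ i, V i →ₗ[K] W i} {j k : ℕ} (hjk : j ≤ k)
    (hcompat : (qIter K W r j k hjk).comp (Ti k) = (Ti j).comp (qIter K V q j k hjk)) :
    (LinearMap.ker (Ti k)).map (qIter K V q j k hjk) ≤ LinearMap.ker (Ti j) := by
  rintro _ ⟨z, hz, rfl⟩
  rw [LinearMap.mem_ker, ← LinearMap.comp_apply, ← hcompat, LinearMap.comp_apply,
    LinearMap.mem_ker.mp hz, map_zero]

theorem stmt6_general (K : Type) [Field K]
    (n : ℕ → ℕ) (q : ∀ i, (Fin (n (i + 1)) → K) →ₗ[K] (Fin (n i) → K))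
    (m : ℕ → ℕ) (r : ∀ i, (Fin (m (i + 1)) → K) →ₗ[K] (Fin (m i) → K))
    (T : ↥(invLim K (fun i => Fin (n i) → K) q) →ₗ[K]
      ↥(invLim K (fun i => Fin (m i) → K) r))
    (Ti : ∀ i, (Fin (n i) → K) →ₗ[K] (Fin (m i) → K))
    (hcomm : ∀ i v, invLimProj K (fun i => Fin (m i) → K) r i (T v) =
        Ti i (invLimProj K (fun i => Fin (n i) → K) q i v))
    (hcompat : ∀ i j (h : i ≤ j),
        (qIter K (fun i => Fin (m i) → K) r i j h).comp (Ti j) =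
          (Ti i).comp (qIter K (fun i => Fin (n i) → K) q i j h))
    (ℓ : ℕ → ℕ) (hℓ : ∀ i, i ≤ ℓ i)
    (hstab : ∀ i j (h : ℓ i ≤ j),
        Submodule.map (qIter K (fun i => Fin (n i) → K) q i j ((hℓ i).trans h))
            (LinearMap.ker (Ti j)) =
          Submodule.map (qIter K (fun i => Fin (n i) → K) q i (ℓ i) (hℓ i))
            (LinearMap.ker (Ti (ℓ i)))) :
    ∀ i, (invLimProj K (fun i => Fin (n i) → K) q i) ''
          (LinearMap.ker T : Set ↥(invLim K (fun i => Fin (n i) → K) q)) =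
        (qIter K (fun i => Fin (n i) → K) q i (ℓ i) (hℓ i)) ''
          (LinearMap.ker (Ti (ℓ i)) : Set (Fin (n (ℓ i)) → K)) := by
  intro i
  set S := stableImage q (fun j => LinearMap.ker (Ti j)) ℓ hℓ
  have hS : ∀ j, q j '' S (j + 1) = S j := fun j => by
    have hmap := map_qIter_stableImage hstab (Nat.le_succ j)
    rw [qIter_succ_self] at hmap
    rw [← Submodule.map_coe, hmap]
  have hSker : ∀ j, S j ≤ LinearMap.ker (Ti j) := fun j =>
    map_qIter_ker_le_ker (hℓ j) (hcompat j (ℓ j) (hℓ j))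
  ext x
  rw [← Submodule.map_coe]
  constructor
  · rintro ⟨v, hv, rfl⟩
    refine ⟨v.1 (ℓ i), ?_, qIter_apply_of_mem_invLim v.2 (hℓ i)⟩
    have hTv := hcomm (ℓ i) v
    rw [hv, map_zero] at hTv
    exact hTv.symm
  · intro hx
    obtain ⟨v, hv, rfl, hvS⟩ := exists_mem_invLim_forall_mem
      (fun j => Set.mapsTo_iff_image_subset.mpr (hS j).subset)
      (fun j => (hS j).symm.subset) hx
    refine ⟨⟨v, hv⟩, Subtype.ext (funext fun j => ?_), rfl⟩
    exact (hcomm j ⟨v, hv⟩).trans (hSker j (hvS j))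

/-- With `T : V → W` a continuous linear map of pro-finite-dimensional
spaces presented by compatible finite-level maps `T_i : V_i → W_i`, and `ℓ(i) ≥ i`
chosen so that `q^j_i (ker T_j) = q^{ℓ(i)}_i (ker T_{ℓ(i)})` for all `j ≥ ℓ(i)`,
the projection of the kernel satisfies `Q_i (ker T) = q^{ℓ(i)}_i (ker T_{ℓ(i)})`
for every `i`. -/
theorem stmt6 (K : Type) [Field K] [TopologicalSpace K] [IsTopologicalDivisionRing K]
    [T2Space K]
    (n : ℕ → ℕ) (q : ∀ i, (Fin (n (i + 1)) → K) →ₗ[K] (Fin (n i) → K))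
    (hq : ∀ i, Continuous (q i))
    (m : ℕ → ℕ) (r : ∀ i, (Fin (m (i + 1)) → K) →ₗ[K] (Fin (m i) → K))
    (hr : ∀ i, Continuous (r i))
    (T : ↥(invLim K (fun i => Fin (n i) → K) q) →ₗ[K]
      ↥(invLim K (fun i => Fin (m i) → K) r))
    (hT : Continuous T)
    (Ti : ∀ i, (Fin (n i) → K) →ₗ[K] (Fin (m i) → K))
    (hcomm : ∀ i v, invLimProj K (fun i => Fin (m i) → K) r i (T v) =
        Ti i (invLimProj K (fun i => Fin (n i) → K) q i v))
    (hcompat : ∀ i j (h : i ≤ j),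
        (qIter K (fun i => Fin (m i) → K) r i j h).comp (Ti j) =
          (Ti i).comp (qIter K (fun i => Fin (n i) → K) q i j h))
    (ℓ : ℕ → ℕ) (hℓ : ∀ i, i ≤ ℓ i)
    (hstab : ∀ i j (h : ℓ i ≤ j),
        Submodule.map (qIter K (fun i => Fin (n i) → K) q i j ((hℓ i).trans h))
            (LinearMap.ker (Ti j)) =
          Submodule.map (qIter K (fun i => Fin (n i) → K) q i (ℓ i) (hℓ i))
            (LinearMap.ker (Ti (ℓ i)))) :
    ∀ i, (invLimProj K (fun i => Fin (n i) → K) q i) ''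
          (LinearMap.ker T : Set ↥(invLim K (fun i => Fin (n i) → K) q)) =
        (qIter K (fun i => Fin (n i) → K) q i (ℓ i) (hℓ i)) ''
          (LinearMap.ker (Ti (ℓ i)) : Set (Fin (n (ℓ i)) → K)) :=
  stmt6_general K n q m r T Ti hcomm hcompat ℓ hℓ hstab
end

section
/- Let G be a countable discrete group, K a topological field, and V a finite-dimensional K-linear G-representation. Then for every p, the group of coboundaries B^p(G,V) = d_p(C^{p-1}(G,V)) in the inhomogeneous bar resolution is a closed subgroup of C^p(G,V) (hence of Z^p(G,V)), so the group cohomology H^p(G,V) is reduced. -/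
/-! The coboundary map is `K`-linear, and each coordinate of `d f` involves only the `p + 2`
faces of its argument. Through the pairing `K^A ≃ Dual K (A →₀ K)`, such a row-finite linear
map `T : K^A → K^B` is the dual map of a linear map `L : (B →₀ K) → (A →₀ K)`, so over a field
its range is the annihilator of `ker L`. That annihilator is cut out by finite linear
combinations of coordinates, hence is closed in the product topology once points of `K` are
closed. -/

/-- The inhomogeneous bar-resolution coboundary operator
`d : C^p(G,V) → C^{p+1}(G,V)`:
`d f (g_1,…,g_{p+1}) = π(g_1) f(g_2,…,g_{p+1})
  + ∑_{i=1}^{p} (-1)^i f(g_1,…,g_i g_{i+1},…,g_{p+1})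
  + (-1)^{p+1} f(g_1,…,g_p)`. -/
def cochainD {K G V : Type} [Field K] [Group G] [AddCommGroup V] [Module K V]
    (π : Representation K G V) (p : ℕ) (f : (Fin p → G) → V) :
    (Fin (p + 1) → G) → V :=
  fun g =>
    π (g 0) (f (fun i => g i.succ)) +
      (∑ i : Fin p, ((-1 : ℤ) ^ ((i : ℕ) + 1)) •
        f (fun j => if (j : ℕ) < (i : ℕ) then g j.castSucc
          else if (j : ℕ) = (i : ℕ) then g i.castSucc * g i.succ
          else g j.succ)) +
      ((-1 : ℤ) ^ (p + 1)) • f (fun j => g j.castSucc)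

namespace LinearMap

variable {K A B : Type*}

def IsRowFinite [CommRing K] (T : (A → K) →ₗ[K] (B → K)) : Prop :=
  ∀ b, ∃ s : Finset A, ∀ x, (∀ a ∈ s, x a = 0) → T x b = 0

local notation "pairing" => Finsupp.llift K K K

namespace IsRowFinite

variable [CommRing K] {T : (A → K) →ₗ[K] (B → K)}

theorem exists_row (hT : T.IsRowFinite) :
    ∃ row : B → A →₀ K, ∀ x b, T x b = pairing A x (row b) := by
  classical
  choose s hs using hT
  refine ⟨fun b => ∑ a ∈ s b, Finsupp.single a (T (Pi.single a 1) b), fun x b => ?_⟩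
  have hx : T (x - ∑ a ∈ s b, x a • Pi.single a 1) b = 0 :=
    hs b _ fun a ha => by simp [Finset.sum_apply, Pi.single_apply, ha]
  rw [map_sub, Pi.sub_apply, sub_eq_zero] at hx
  simp [hx, map_sum, Finset.sum_apply, mul_comm]

theorem exists_eq_dualMap (hT : T.IsRowFinite) :
    ∃ L : (B →₀ K) →ₗ[K] (A →₀ K), ∀ x, pairing B (T x) = L.dualMap (pairing A x) := by
  obtain ⟨row, hrow⟩ := hT.exists_row
  refine ⟨Finsupp.linearCombination K row, fun x => Finsupp.lhom_ext fun b c => ?_⟩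
  simp [hrow, smul_eq_mul]

end IsRowFinite

theorem isClosed_setOf_pairing_mem_dualAnnihilator [CommRing K] [TopologicalSpace K]
    [IsTopologicalRing K] [T1Space K] (W : Submodule K (B →₀ K)) :
    IsClosed {y : B → K | pairing B y ∈ W.dualAnnihilator} := by
  simp only [Submodule.mem_dualAnnihilator, Set.ofPred_forall]
  refine isClosed_biInter fun u _ => isClosed_singleton.preimage ?_
  simp only [Finsupp.llift_apply, Finsupp.lift_apply, Finsupp.sum]
  fun_prop

theorem IsRowFinite.isClosed_range [Field K] [TopologicalSpace K] [IsTopologicalRing K]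
    [T1Space K] {T : (A → K) →ₗ[K] (B → K)} (hT : T.IsRowFinite) :
    IsClosed (Set.range T) := by
  obtain ⟨L, hL⟩ := hT.exists_eq_dualMap
  convert isClosed_setOf_pairing_mem_dualAnnihilator (ker L)
  rw [← range_dualMap_eq_dualAnnihilator_ker]
  ext y
  constructor
  · rintro ⟨x, rfl⟩
    exact ⟨_, (hL x).symm⟩
  · rintro ⟨φ, hφ⟩
    refine ⟨(pairing A).symm φ, (pairing B).injective ?_⟩
    rw [hL, LinearEquiv.apply_symm_apply, hφ]

end LinearMap

section Coboundary

variable {K G V : Type} [Field K] [Group G] [AddCommGroup V] [Module K V]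

def cochainDₗ (π : Representation K G V) (p : ℕ) :
    ((Fin p → G) → V) →ₗ[K] ((Fin (p + 1) → G) → V) where
  toFun := cochainD π p
  map_add' f f' := by
    funext g
    simp only [cochainD, Pi.add_apply, map_add, smul_add, Finset.sum_add_distrib]
    abel
  map_smul' c f := by
    funext g
    simp only [cochainD, Pi.smul_apply, map_smul, smul_comm _ c, ← Finset.smul_sum,
      ← smul_add, RingHom.id_apply]

theorem exists_finset_cochainD_eq_zero (π : Representation K G V) (p : ℕ)
    (g : Fin (p + 1) → G) :
    ∃ s : Finset (Fin p → G), ∀ f, (∀ h ∈ s, f h = 0) → cochainD π p f g = 0 := by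
  classical
  refine ⟨insert (fun i => g i.succ) (insert (fun j => g j.castSucc)
    (Finset.univ.image fun i : Fin p => fun j : Fin p =>
      if (j : ℕ) < i then g j.castSucc
      else if (j : ℕ) = i then g i.castSucc * g i.succ else g j.succ)), fun f hf => ?_⟩
  simp only [Finset.mem_insert, Finset.mem_image, Finset.mem_univ, true_and] at hf
  simp [cochainD, hf]

end Coboundary

section Coordinates

variable {K G ι : Type} [Field K] [Group G]

def cochainDUncurried (π : Representation K G (ι → K)) (p : ℕ) :
    ((Fin p → G) × ι → K) →ₗ[K] ((Fin (p + 1) → G) × ι → K) :=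
  (LinearEquiv.curry K K _ ι).symm.toLinearMap ∘ₗ cochainDₗ π p ∘ₗ
    (LinearEquiv.curry K K _ ι).toLinearMap

theorem isRowFinite_cochainDUncurried [Fintype ι] (π : Representation K G (ι → K)) (p : ℕ) :
    (cochainDUncurried π p).IsRowFinite := by
  rintro ⟨g, i⟩
  obtain ⟨s, hs⟩ := exists_finset_cochainD_eq_zero π p g
  refine ⟨s ×ˢ Finset.univ, fun x hx => ?_⟩
  have := hs (Function.curry x) fun h hh => funext fun j => hx (h, j) (by simp [hh])
  exact congrFun this i

theorem range_cochainD_eq_preimage (π : Representation K G (ι → K)) (p : ℕ) :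
    Set.range (cochainD π p) = Function.uncurry ⁻¹' Set.range (cochainDUncurried π p) := by
  ext y
  simp [cochainDUncurried, cochainDₗ, (Equiv.curry _ _ _).symm.surjective.exists,
    Function.uncurry_injective.eq_iff]

end Coordinates

theorem stmt11_general (K : Type) [Field K] [TopologicalSpace K] [IsTopologicalDivisionRing K]
    [T2Space K]
    (G : Type) [Group G]
    (N : ℕ) (π : Representation K G (Fin N → K)) (p : ℕ) :
    IsClosed (Set.range (cochainD π p) : Set ((Fin (p + 1) → G) → Fin N → K)) := by
  rw [range_cochainD_eq_preimage]
  exact (isRowFinite_cochainDUncurried π p).isClosed_range.preimage (by fun_prop)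

/-- For a countable discrete group `G`, a topological field `K`, and a
finite-dimensional `K`-linear `G`-representation `V = K^N`, the group of coboundaries
`B^{p+1}(G,V) = d(C^p(G,V))` of the inhomogeneous bar resolution is closed in the
cochain space `C^{p+1}(G,V)` (hence in `Z^{p+1}(G,V)`) for every `p`; together with
the trivial case `B^0 = 0` this says all coboundary groups are closed, i.e. the
cohomology `H^*(G,V)` is reduced. -/
theorem stmt11 (K : Type) [Field K] [TopologicalSpace K] [IsTopologicalDivisionRing K]
    [T2Space K]
    (G : Type) [Group G] [Countable G]
    (N : ℕ) (π : Representation K G (Fin N → K)) (p : ℕ) :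
    IsClosed (Set.range (cochainD π p) : Set ((Fin (p + 1) → G) → Fin N → K)) :=
  stmt11_general K G N π p
end

section
/- Let T : ℤ^ℕ → ℤ^ℕ be T(p_1,p_2,…) = (p_1 − 2p_2, p_2 − 2p_3, …). A sequence (q_1, q_2, …) lies in the image of T if and only if there exists an integer p_1 with p_1 ≡ q_1 + 2q_2 + ⋯ + 2^{i-1} q_i (mod 2^i) for every i ≥ 1. -/
/-- For `T : ℤ^ℕ → ℤ^ℕ`, `T(p_1,p_2,…) = (p_1 − 2p_2, p_2 − 2p_3, …)`,
a sequence `q` lies in the image of `T` iff there is an integer `p₁` with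
`p₁ ≡ q_1 + 2q_2 + ⋯ + 2^{i-1} q_i (mod 2^i)` for every `i ≥ 1`. -/
theorem stmt14 (q : ℕ → ℤ) :
    q ∈ Set.range (fun p : ℕ → ℤ => fun i => p i - 2 * p (i + 1)) ↔
      ∃ p₁ : ℤ, ∀ i : ℕ, 0 < i →
        p₁ ≡ ∑ j ∈ Finset.range i, 2 ^ j * q j [ZMOD (2 ^ i : ℤ)] := by
  constructor
  · rintro ⟨p, rfl⟩
    refine ⟨p 0, fun i hi => ?_⟩
    have key : ∀ n : ℕ, ∑ j ∈ Finset.range n, 2 ^ j * (p j - 2 * p (j+1)) = p 0 - 2 ^ n * p n := by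
      intro n
      induction n with
      | zero => simp
      | succ n ih => rw [Finset.sum_range_succ, ih]; ring
    rw [key]
    exact Int.modEq_iff_dvd.mpr ⟨-p i, by ring⟩
  · rintro ⟨p₁, h⟩
    set S : ℕ → ℤ := fun i => ∑ j ∈ Finset.range i, 2 ^ j * q j with hS
    have hdvd : ∀ i, (2:ℤ)^i ∣ p₁ - S i := by
      intro i
      rcases Nat.eq_zero_or_pos i with h0 | h0
      · subst h0; simp
      · exact (h i h0).symm.dvd
    refine ⟨fun i => (p₁ - S i) / 2^i, ?_⟩
    funext i
    obtain ⟨a, ha⟩ := hdvd i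
    obtain ⟨b, hb⟩ := hdvd (i+1)
    have h2i : (2:ℤ)^i ≠ 0 := by positivity
    have h2i1 : (2:ℤ)^(i+1) ≠ 0 := by positivity
    have e1 : (p₁ - S i) / 2^i = a := by rw [ha, Int.mul_ediv_cancel_left _ h2i]
    have e2 : (p₁ - S (i+1)) / 2^(i+1) = b := by rw [hb, Int.mul_ediv_cancel_left _ h2i1]
    simp only [e1, e2]
    have hstep : S (i+1) = S i + 2^i * q i := by simp [hS, Finset.sum_range_succ]
    have key : (2:ℤ)^i * (a - 2*b) = 2^i * q i := by
      linear_combination hb - ha + hstep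
    have := mul_left_cancel₀ h2i key
    linarith
end

section
/- Let T : ℤ^ℕ → ℤ^ℕ be T(p_1,p_2,…) = (p_1 − 2p_2, p_2 − 2p_3, …). Then every finitely supported sequence (q_i) (with q_i = 0 for all large i) lies in the image of T; in particular the image of T is dense in ℤ^ℕ for the product topology. -/
lemma stmt15_aux (q : ℕ → ℤ) (N : ℕ) (hN : ∀ i, N ≤ i → q i = 0) :
    q ∈ Set.range (fun p : ℕ → ℤ => fun i => p i - 2 * p (i + 1)) := by
  refine ⟨fun i => ∑ j ∈ Finset.Ico i N, 2 ^ (j - i) * q j, ?_⟩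
  funext i
  show (∑ j ∈ Finset.Ico i N, 2 ^ (j - i) * q j)
      - 2 * ∑ j ∈ Finset.Ico (i+1) N, 2 ^ (j - (i+1)) * q j = q i
  by_cases h : i < N
  · rw [Finset.sum_eq_sum_Ico_succ_bot h]
    simp only [Nat.sub_self, pow_zero, one_mul]
    rw [Finset.mul_sum]
    have : ∀ j ∈ Finset.Ico (i+1) N, 2 * (2 ^ (j - (i+1)) * q j) = 2 ^ (j - i) * q j := by
      intro j hj
      simp only [Finset.mem_Ico] at hj
      rw [← mul_assoc, ← pow_succ']
      congr 2
      omega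
    rw [Finset.sum_congr rfl this]
    ring
  · rw [Finset.Ico_eq_empty (by omega), Finset.Ico_eq_empty (by omega)]
    simp [hN i (by omega)]

/-- For `T : ℤ^ℕ → ℤ^ℕ`, `T(p_1,p_2,…) = (p_1 − 2p_2, p_2 − 2p_3, …)`,
every finitely supported sequence lies in the image of `T`; in particular the image
of `T` is dense in `ℤ^ℕ` for the product topology. -/
theorem stmt15 :
    (∀ q : ℕ → ℤ, (∃ N, ∀ i, N ≤ i → q i = 0) →
        q ∈ Set.range (fun p : ℕ → ℤ => fun i => p i - 2 * p (i + 1))) ∧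
      Dense (Set.range (fun p : ℕ → ℤ => fun i => p i - 2 * p (i + 1))) := by
  constructor
  · rintro q ⟨N, hN⟩
    exact stmt15_aux q N hN
  · intro f
    rw [mem_closure_iff]
    intro o ho hf
    rcases isOpen_pi_iff.1 ho f hf with ⟨I, u, hu, hsub⟩
    classical
    set M := (I.sup id) + 1 with hM
    set q : ℕ → ℤ := fun i => if i < M then f i else 0 with hq
    refine ⟨q, hsub ?_, stmt15_aux q M (fun i hi => by simp [hq, Nat.not_lt.2 hi])⟩
    intro i hi
    have : i < M := by
      have := Finset.le_sup (f := id) hi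
      simp only [id] at this
      omega
    simpa [hq, this] using (hu i hi).2
end

section
/- Let T : ℤ^ℕ → ℤ^ℕ be T(p_1,p_2,…) = (p_1 − 2p_2, p_2 − 2p_3, …). Then the alternating sequence (1,0,1,0,1,0,…) is not in the image of T. Consequently T has dense but non-closed image, so the automatic closure theorem fails for inverse limits of finitely generated free abelian groups. -/
/-!
A preimage of `q` under `p ↦ (p i - 2 p (i+1))ᵢ` is forced, index by index, to be
`p i = ∑ⱼ 2ʲ q (i+j)`, which converges only 2-adically; truncating the sum shows that the image
is dense. For the alternating sequence, `p (2k) = 1 + 4 p (2k+2)`, i.e. `3 p (2k) + 1` is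
multiplied by `4` at each step, so `3 p 0 + 1` would be a nonzero integer divisible by every
power of `4`.
-/

open Filter Finset

def shiftSub {R : Type*} [Ring R] (a : R) (p : ℕ → R) : ℕ → R := fun i => p i - a * p (i + 1)

def alternating : ℕ → ℤ := fun i => if i % 2 = 0 then 1 else 0

lemma dense_of_forall_exists_eq_of_lt {X : Type*} [TopologicalSpace X] {s : Set (ℕ → X)}
    (h : ∀ (q : ℕ → X) (n : ℕ), ∃ p ∈ s, ∀ i < n, p i = q i) : Dense s := by
  intro q
  choose f hfs hf using h q
  refine mem_closure_of_tendsto (b := atTop) (tendsto_pi_nhds.2 fun i => ?_)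
    (Eventually.of_forall hfs)
  exact tendsto_atTop_of_eventually_const (i₀ := i + 1) fun n hn => hf n i hn

section Truncation

variable {R : Type*} [Ring R] (a : R) (q : ℕ → R)

def truncatedPreimage (n i : ℕ) : R := ∑ j ∈ range (n - i), a ^ j * q (i + j)

lemma shiftSub_truncatedPreimage {n i : ℕ} (hi : i < n) :
    shiftSub a (truncatedPreimage a q n) i = q i := by
  obtain ⟨m, hm⟩ : ∃ m, n - i = m + 1 := ⟨n - (i + 1), by omega⟩
  have hm' : n - (i + 1) = m := by omega
  simp only [shiftSub, truncatedPreimage, hm, hm', sum_range_succ', mul_sum, pow_succ', mul_assoc,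
    pow_zero, one_mul, add_zero, Nat.add_assoc, Nat.add_comm 1]
  abel

theorem dense_range_shiftSub [TopologicalSpace R] : Dense (Set.range (shiftSub a)) :=
  dense_of_forall_exists_eq_of_lt fun q n =>
    ⟨_, Set.mem_range_self (truncatedPreimage a q n), fun _ hi => shiftSub_truncatedPreimage a q hi⟩

end Truncation

lemma three_mul_add_one_eq_four_pow_mul {p : ℕ → ℤ} (hp : shiftSub 2 p = alternating) (k : ℕ) :
    3 * p 0 + 1 = 4 ^ k * (3 * p (2 * k) + 1) := by
  induction k with
  | zero => simp
  | succ k ih =>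
    have hodd : p (2 * k) - 2 * p (2 * k + 1) = 1 := by
      simpa [shiftSub, alternating] using congrFun hp (2 * k)
    have heven : p (2 * k + 1) - 2 * p (2 * (k + 1)) = 0 := by
      simpa [shiftSub, alternating, Nat.add_mod, Nat.mul_succ] using congrFun hp (2 * k + 1)
    rw [ih]
    linear_combination 4 ^ k * (3 * hodd + 6 * heven)

theorem alternating_not_mem_range_shiftSub_two : alternating ∉ Set.range (shiftSub 2) := by
  rintro ⟨p, hp⟩
  have hinfinite : ¬FiniteMultiplicity 4 (3 * p 0 + 1) := fun ⟨k, hk⟩ =>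
    hk ⟨_, three_mul_add_one_eq_four_pow_mul hp (k + 1)⟩
  have hzero : 3 * p 0 + 1 = 0 := by
    by_contra hne
    exact hinfinite (Int.finiteMultiplicity_iff.2 ⟨by decide, hne⟩)
  omega

/-- For `T : ℤ^ℕ → ℤ^ℕ`, `T(p_1,p_2,…) = (p_1 − 2p_2, p_2 − 2p_3, …)`,
the alternating sequence `(1,0,1,0,…)` is not in the image of `T`; consequently `T`
has dense but non-closed image, so the automatic closure theorem fails for inverse
limits of finitely generated free abelian groups. -/
theorem stmt16 :
    (fun i : ℕ => if i % 2 = 0 then (1 : ℤ) else 0) ∉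
        Set.range (fun p : ℕ → ℤ => fun i => p i - 2 * p (i + 1)) ∧
      Dense (Set.range (fun p : ℕ → ℤ => fun i => p i - 2 * p (i + 1))) ∧
      ¬ IsClosed (Set.range (fun p : ℕ → ℤ => fun i => p i - 2 * p (i + 1))) := by
  have hdense : Dense (Set.range (shiftSub (2 : ℤ))) := dense_range_shiftSub 2
  refine ⟨alternating_not_mem_range_shiftSub_two, hdense, fun hclosed : IsClosed (Set.range (shiftSub (2 : ℤ))) => ?_⟩
  apply alternating_not_mem_range_shiftSub_two
  rw [← hclosed.closure_eq, hdense.closure_eq]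
  exact Set.mem_univ _
end
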